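/- Fix integers n ≥ 1 and 0 < v_1 < v_2 < ⋯ < v_n < v_{n+1} = N. Let d be a degree vector that is aligned and not identically zero. Then D(d) < −1. -/

import Mathlib

/-!
Let `i₀` be the highest level carrying a nonzero degree, so that level `i₀ + 1` vanishes. At every
level the alignment injection `f` gives `B(d^i_j - d^i_k) ≤ B(d^i_j - d^{i+1}_{f k})`, so each
level contributes at most `0` to `D(d)`. At level `i₀` every `B(d_j - d^{i₀+1}_r)` equals `B(d_j)`
and the diagonal terms `k = j` vanish, so that level contributes at most
`Σ_j (v_{i₀} - 1 - v_{i₀+1}) B(d_j) ≤ -2 B(d_{j₀}) ≤ -2`.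
-/

open Finset

/-- `Bb m = m(m+1)/2` for `m ≥ 0` and `Bb m = 0` for `m < 0`. -/
def Bb (m : ℤ) : ℤ := if 0 ≤ m then m * (m + 1) / 2 else 0

/-- The degree `D(d)` of the coefficient `J_d` of the twisted small `J`-function of
the abelianization of `Fl(v_1,…,v_n; N)`:
`D(d) = Σ_{i=1}^{n} ( Σ_{1≤j,k≤v_i} B(d^i_j − d^i_k)
        − Σ_{1≤j≤v_i} Σ_{1≤r≤v_{i+1}} B(d^i_j − d^{i+1}_r) )`. -/
def degD (n : ℕ) (v : ℕ → ℕ) (d : ℕ → ℕ → ℕ) : ℤ :=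
  ∑ i ∈ Icc 1 n,
    ((∑ j ∈ Icc 1 (v i), ∑ k ∈ Icc 1 (v i), Bb ((d i j : ℤ) - (d i k : ℤ)))
      - ∑ j ∈ Icc 1 (v i), ∑ r ∈ Icc 1 (v (i + 1)),
          Bb ((d i j : ℤ) - (d (i + 1) r : ℤ)))

/-- A degree vector `d` is aligned if for every `1 ≤ i ≤ n` there is an injection
`f_i : {1,…,v_i} → {1,…,v_{i+1}}` with `d^i_j ≥ d^{i+1}_{f_i(j)}` for all `j`. -/
def Aligned (n : ℕ) (v : ℕ → ℕ) (d : ℕ → ℕ → ℕ) : Prop :=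
  ∀ i, 1 ≤ i → i ≤ n → ∃ f : ℕ → ℕ,
    Set.InjOn f (Set.Icc 1 (v i)) ∧
    ∀ j, 1 ≤ j → j ≤ v i → 1 ≤ f j ∧ f j ≤ v (i + 1) ∧ d (i + 1) (f j) ≤ d i j

lemma Bb_nonneg (m : ℤ) : 0 ≤ Bb m := by
  unfold Bb
  split_ifs
  · exact Int.ediv_nonneg (by nlinarith) (by norm_num)
  · exact le_rfl

lemma Bb_mono : Monotone Bb := by
  intro a b h
  unfold Bb
  split_ifs with ha hb
  · exact Int.ediv_le_ediv (by norm_num) (by nlinarith)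
  · exact absurd (ha.trans h) hb
  · exact Int.ediv_nonneg (by nlinarith) (by norm_num)
  · exact le_rfl

lemma Bb_zero : Bb 0 = 0 := by decide

lemma one_le_Bb {m : ℤ} (h : 1 ≤ m) : 1 ≤ Bb m :=
  (show (1 : ℤ) = Bb 1 by decide) ▸ Bb_mono h

section Levels

variable {ι κ : Type*} (s : Finset ι) (t : Finset κ) (a : ι → ℕ) (b : κ → ℕ)

lemma sum_Bb_sub_le_of_injOn [DecidableEq κ] (x : ℤ) (f : ι → κ) (hinj : Set.InjOn f s)
    (hmaps : Set.MapsTo f s t) (hle : ∀ k ∈ s, b (f k) ≤ a k) :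
    ∑ k ∈ s, Bb (x - a k) ≤ ∑ r ∈ t, Bb (x - b r) :=
  calc ∑ k ∈ s, Bb (x - a k)
      ≤ ∑ k ∈ s, Bb (x - b (f k)) :=
        sum_le_sum fun k hk => Bb_mono (by have := hle k hk; omega)
    _ = ∑ r ∈ s.image f, Bb (x - b r) := (sum_image (f := fun r => Bb (x - b r)) hinj).symm
    _ ≤ ∑ r ∈ t, Bb (x - b r) :=
        sum_le_sum_of_subset_of_nonneg (coe_subset.mp (by simpa using hmaps.image_subset))
          fun _ _ _ => Bb_nonneg _

lemma sum_Bb_sub_le_card_sub_one_mul [DecidableEq ι] {j : ι} (hj : j ∈ s) :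
    ∑ k ∈ s, Bb (a j - a k) ≤ (#s - 1 : ℤ) * Bb (a j) := by
  have hcard : (#(s.erase j) : ℤ) = #s - 1 := by
    rw [card_erase_of_mem hj, Nat.cast_sub (card_pos.mpr ⟨j, hj⟩), Nat.cast_one]
  calc ∑ k ∈ s, Bb (a j - a k)
      = ∑ k ∈ s.erase j, Bb (a j - a k) := by
        rw [← sum_erase_add _ _ hj, sub_self, Bb_zero, add_zero]
    _ ≤ #(s.erase j) • Bb (a j) := sum_le_card_nsmul _ _ _ fun k _ => Bb_mono (by omega)
    _ = (#s - 1 : ℤ) * Bb (a j) := by rw [nsmul_eq_mul, hcard]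

def levelDeg : ℤ :=
  (∑ j ∈ s, ∑ k ∈ s, Bb ((a j : ℤ) - (a k : ℤ))) - ∑ j ∈ s, ∑ r ∈ t, Bb ((a j : ℤ) - (b r : ℤ))

lemma levelDeg_nonpos_of_injOn [DecidableEq κ] (f : ι → κ) (hinj : Set.InjOn f s)
    (hmaps : Set.MapsTo f s t) (hle : ∀ k ∈ s, b (f k) ≤ a k) :
    levelDeg s t a b ≤ 0 :=
  sub_nonpos.mpr <| sum_le_sum fun j _ => sum_Bb_sub_le_of_injOn s t a b (a j) f hinj hmaps hle

lemma levelDeg_le_neg_two [DecidableEq ι] (hcard : #s < #t) (hb : ∀ r ∈ t, b r = 0) {j₀ : ι}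
    (hj₀ : j₀ ∈ s) (ha : a j₀ ≠ 0) :
    levelDeg s t a b ≤ -2 := by
  have htarget (j : ι) : ∑ r ∈ t, Bb ((a j : ℤ) - (b r : ℤ)) = #t * Bb (a j) := by
    rw [sum_congr rfl fun r hr => by rw [hb r hr, Nat.cast_zero, sub_zero], sum_const,
      nsmul_eq_mul]
  have hcard' : (#s : ℤ) - 1 - #t ≤ -2 := by omega
  calc levelDeg s t a b
      = ∑ j ∈ s, (∑ k ∈ s, Bb ((a j : ℤ) - (a k : ℤ)) - #t * Bb (a j)) := by
        simp only [levelDeg, htarget, sum_sub_distrib]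
    _ ≤ ∑ j ∈ s, (-2) * Bb (a j) := sum_le_sum fun j hj => by
        nlinarith [sum_Bb_sub_le_card_sub_one_mul s a hj, Bb_nonneg (a j)]
    _ = -2 * ∑ j ∈ s, Bb (a j) := (mul_sum _ _ _).symm
    _ ≤ -2 * Bb (a j₀) :=
        mul_le_mul_of_nonpos_left (single_le_sum (fun j _ => Bb_nonneg (a j)) hj₀) (by norm_num)
    _ ≤ -2 := by nlinarith [one_le_Bb (show (1 : ℤ) ≤ a j₀ by omega)]

end Levels

lemma degD_eq_sum_levelDeg (n : ℕ) (v : ℕ → ℕ) (d : ℕ → ℕ → ℕ) :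
    degD n v d = ∑ i ∈ Icc 1 n, levelDeg (Icc 1 (v i)) (Icc 1 (v (i + 1))) (d i) (d (i + 1)) :=
  rfl

lemma levelDeg_nonpos_of_aligned {n : ℕ} {v : ℕ → ℕ} {d : ℕ → ℕ → ℕ}
    (halign : Aligned n v d) {i : ℕ} (hi : i ∈ Icc 1 n) :
    levelDeg (Icc 1 (v i)) (Icc 1 (v (i + 1))) (d i) (d (i + 1)) ≤ 0 := by
  obtain ⟨f, hinj, hf⟩ := halign i (mem_Icc.mp hi).1 (mem_Icc.mp hi).2
  refine levelDeg_nonpos_of_injOn _ _ _ _ f (by simpa using hinj) (fun j hj => ?_) fun j hj => ?_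
  · simp only [coe_Icc, Set.mem_Icc] at hj ⊢
    exact ⟨(hf j hj.1 hj.2).1, (hf j hj.1 hj.2).2.1⟩
  · exact (hf j (mem_Icc.mp hj).1 (mem_Icc.mp hj).2).2.2

lemma exists_top_nonzero_level (n : ℕ) (v : ℕ → ℕ) (d : ℕ → ℕ → ℕ)
    (hdtop : ∀ r, d (n + 1) r = 0)
    (hne : ∃ i j, 1 ≤ i ∧ i ≤ n ∧ 1 ≤ j ∧ j ≤ v i ∧ d i j ≠ 0) :
    ∃ i₀ ∈ Icc 1 n, (∃ j₀ ∈ Icc 1 (v i₀), d i₀ j₀ ≠ 0) ∧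
      ∀ r ∈ Icc 1 (v (i₀ + 1)), d (i₀ + 1) r = 0 := by
  classical
  let P (i : ℕ) : Prop := ∃ j ∈ Icc 1 (v i), d i j ≠ 0
  obtain ⟨i, j, hi1, hin, hj1, hjv, hd⟩ := hne
  have hPi : P i := ⟨j, mem_Icc.mpr ⟨hj1, hjv⟩, hd⟩
  refine ⟨Nat.findGreatest P n, mem_Icc.mpr ⟨hi1.trans (Nat.le_findGreatest hin hPi),
    Nat.findGreatest_le n⟩, Nat.findGreatest_spec hin hPi, fun r hr => ?_⟩
  rcases (Nat.findGreatest_le (P := P) n).lt_or_eq with hlt | heq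
  · by_contra hr0
    exact Nat.findGreatest_is_greatest (Nat.lt_succ_self _) hlt ⟨r, hr, hr0⟩
  · rw [heq]
    exact hdtop r

theorem degD_lt_neg_one_general (n : ℕ) (v : ℕ → ℕ) (d : ℕ → ℕ → ℕ)
    (hvmono : ∀ i, 1 ≤ i → i ≤ n → v i < v (i + 1))
    (hdtop : ∀ r, d (n + 1) r = 0)
    (halign : Aligned n v d)
    (hne : ∃ i j, 1 ≤ i ∧ i ≤ n ∧ 1 ≤ j ∧ j ≤ v i ∧ d i j ≠ 0) :
    degD n v d < -1 := by
  obtain ⟨i₀, hi₀, ⟨j₀, hj₀, hd⟩, hzero⟩ := exists_top_nonzero_level n v d hdtop hne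
  have htop : levelDeg (Icc 1 (v i₀)) (Icc 1 (v (i₀ + 1))) (d i₀) (d (i₀ + 1)) ≤ -2 := by
    refine levelDeg_le_neg_two _ _ _ _ ?_ hzero hj₀ hd
    simpa using hvmono i₀ (mem_Icc.mp hi₀).1 (mem_Icc.mp hi₀).2
  have hrest : ∑ i ∈ (Icc 1 n).erase i₀,
      levelDeg (Icc 1 (v i)) (Icc 1 (v (i + 1))) (d i) (d (i + 1)) ≤ 0 :=
    sum_nonpos fun i hi => levelDeg_nonpos_of_aligned halign (mem_of_mem_erase hi)
  rw [degD_eq_sum_levelDeg, ← add_sum_erase _ _ hi₀]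
  omega

/-- For an aligned, not identically zero degree vector `d`, the `q`-degree of the
`J`-function coefficient satisfies `D(d) < −1`. -/
theorem degD_lt_neg_one (n : ℕ) (hn : 1 ≤ n) (v : ℕ → ℕ) (d : ℕ → ℕ → ℕ)
    (hv1 : 0 < v 1) (hvmono : ∀ i, 1 ≤ i → i ≤ n → v i < v (i + 1))
    (hdtop : ∀ r, d (n + 1) r = 0)
    (halign : Aligned n v d)
    (hne : ∃ i j, 1 ≤ i ∧ i ≤ n ∧ 1 ≤ j ∧ j ≤ v i ∧ d i j ≠ 0) :
    degD n v d < -1 :=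
  degD_lt_neg_one_general n v d hvmono hdtop halign hne
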